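/- Let H, A be real numbers, B a complex number, and define Q : ℂ² → ℝ by Q(v₁,v₂) = H(|v₁|⁴ + |v₂|⁴) + 4A|v₁|²|v₂|² + 2·Re(B·(v₁·conj(v₂))²). Then Q(v₁,v₂) < 0 for every (v₁,v₂) ∈ ℂ² with |v₁|² + |v₂|² = 1 if and only if H < 0 and H + (1/2)(2A − H + |B|) < 0. -/

import Mathlib

/-!
Put `p = ‖v₁‖²`, `q = ‖v₂‖²` and `C = H + (2A − H + ‖B‖)/2`. Since `Re (B z²) ≤ ‖B‖ ‖z‖²`,
`Q v ≤ (p − q)² H + 4pq C`, and on the unit sphere `(p − q)² + 4pq = (p + q)² = 1`, so `Q v` is at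
most a convex combination of `H` and `C`. Both values are attained: `H` at `(1, 0)`, and `C` at
`(w, 1)/√2` for a unit `w` turning `B w²` into `‖B‖`.
-/

open Complex

noncomputable def cheungQuartic (H A : ℝ) (B : ℂ) (v : ℂ × ℂ) : ℝ :=
  H * (‖v.1‖ ^ 4 + ‖v.2‖ ^ 4) + 4 * A * ‖v.1‖ ^ 2 * ‖v.2‖ ^ 2
    + 2 * (B * (v.1 * (starRingEnd ℂ) v.2) ^ 2).re

lemma exists_norm_eq_one_re_mul_sq_eq_norm (B : ℂ) :
    ∃ w : ℂ, ‖w‖ = 1 ∧ (B * w ^ 2).re = ‖B‖ := by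
  refine ⟨exp (↑(-B.arg / 2) * I), norm_exp_ofReal_mul_I _, ?_⟩
  have hw : exp (↑(-B.arg / 2) * I) ^ 2 * exp (↑B.arg * I) = 1 := by
    rw [← exp_nat_mul, ← exp_add, ← exp_zero]
    congr 1
    push_cast
    ring
  nth_rw 1 [← norm_mul_exp_arg_mul_I B]
  rw [mul_right_comm, mul_assoc, hw, mul_one, ofReal_re]

lemma re_mul_sq_le_norm_mul_norm_sq (B z : ℂ) : (B * z ^ 2).re ≤ ‖B‖ * ‖z‖ ^ 2 :=
  (re_le_norm _).trans_eq (by rw [norm_mul, norm_pow])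

lemma cheungQuartic_le (H A : ℝ) (B : ℂ) (v : ℂ × ℂ) :
    cheungQuartic H A B v ≤ (‖v.1‖ ^ 2 - ‖v.2‖ ^ 2) ^ 2 * H
      + 4 * (‖v.1‖ ^ 2 * ‖v.2‖ ^ 2) * (H + (1 / 2) * (2 * A - H + ‖B‖)) := by
  have hre := re_mul_sq_le_norm_mul_norm_sq B (v.1 * (starRingEnd ℂ) v.2)
  rw [norm_mul, norm_conj] at hre
  unfold cheungQuartic
  nlinarith

lemma cheungQuartic_one_zero (H A : ℝ) (B : ℂ) : cheungQuartic H A B (1, 0) = H := by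
  simp [cheungQuartic]

lemma cheungQuartic_mul_ofReal_ofReal (H A : ℝ) {B w : ℂ} (hw : ‖w‖ = 1) (s : ℝ) :
    cheungQuartic H A B (w * s, s) = 2 * s ^ 4 * (H + 2 * A + (B * w ^ 2).re) := by
  have hz : (w * s * (starRingEnd ℂ) s) ^ 2 = w ^ 2 * ((s ^ 4 : ℝ) : ℂ) := by
    rw [conj_ofReal]; push_cast; ring
  have hs : |s| ^ 4 = s ^ 4 := by rw [pow_abs, abs_of_nonneg (by positivity)]
  simp only [cheungQuartic, hz, ← mul_assoc, re_mul_ofReal, norm_mul, hw, norm_real,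
    Real.norm_eq_abs, one_mul, sq_abs, hs]
  ring

lemma exists_cheungQuartic_eq (H A : ℝ) (B : ℂ) :
    ∃ v : ℂ × ℂ, ‖v.1‖ ^ 2 + ‖v.2‖ ^ 2 = 1 ∧
      cheungQuartic H A B v = H + (1 / 2) * (2 * A - H + ‖B‖) := by
  obtain ⟨w, hw, hBw⟩ := exists_norm_eq_one_re_mul_sq_eq_norm B
  have hs : √2⁻¹ ^ 2 = 2⁻¹ := Real.sq_sqrt (by norm_num)
  refine ⟨(w * (√2⁻¹ : ℝ), (√2⁻¹ : ℝ)), ?_, ?_⟩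
  · simp only [norm_mul, hw, norm_real, Real.norm_eq_abs, one_mul, sq_abs, hs]
    norm_num
  · rw [cheungQuartic_mul_ofReal_ofReal H A hw, hBw, show √2⁻¹ ^ 4 = (√2⁻¹ ^ 2) ^ 2 by ring, hs]
    ring

/-- Cheung's negativity criterion (3.4): the quartic form `Q` is negative on the
whole unit sphere of `ℂ²` iff `H < 0` and `H + (1/2)(2A − H + |B|) < 0`. -/
theorem cheung_negativity_criterion (H A : ℝ) (B : ℂ) (Q : ℂ × ℂ → ℝ)
    (hQ : ∀ v : ℂ × ℂ, Q v =
      H * ((‖v.1‖) ^ 4 + (‖v.2‖) ^ 4)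
        + 4 * A * (‖v.1‖) ^ 2 * (‖v.2‖) ^ 2
        + 2 * (B * (v.1 * (starRingEnd ℂ) v.2) ^ 2).re) :
    (∀ v : ℂ × ℂ, (‖v.1‖) ^ 2 + (‖v.2‖) ^ 2 = 1 → Q v < 0)
      ↔ H < 0 ∧ H + (1 / 2) * (2 * A - H + ‖B‖) < 0 := by
  obtain rfl : Q = cheungQuartic H A B := funext hQ
  constructor
  · intro hneg
    obtain ⟨v, hv, hQv⟩ := exists_cheungQuartic_eq H A B
    exact ⟨cheungQuartic_one_zero H A B ▸ hneg (1, 0) (by simp), hQv ▸ hneg v hv⟩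
  · rintro ⟨hH, hC⟩ v hv
    have hweights : (‖v.1‖ ^ 2 - ‖v.2‖ ^ 2) ^ 2 + 4 * (‖v.1‖ ^ 2 * ‖v.2‖ ^ 2) = 1 := by
      linear_combination (‖v.1‖ ^ 2 + ‖v.2‖ ^ 2 + 1) * hv
    have hcomb := convex_Iio (0 : ℝ) hH hC (sq_nonneg _) (by positivity) hweights
    simp only [smul_eq_mul, Set.mem_Iio] at hcomb
    exact (cheungQuartic_le H A B v).trans_lt hcomb
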